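/- Let Z be a Zinbiel algebra and A an abelian subalgebra of codimension one in Z (i.e., dim Z = dim A + 1). Then A is a two-sided ideal of Z. -/
import Mathlib


variable {F : Type*} [Field F] {Z : Type*} [AddCommGroup Z] [Module F Z]

/-- `A` is a subalgebra of the algebra with multiplication `b`. -/
def IsSubalg (b : Z →ₗ[F] Z →ₗ[F] Z) (A : Submodule F Z) : Prop :=
  ∀ x ∈ A, ∀ y ∈ A, b x y ∈ A

/-- `A` is abelian: all products of elements of `A` vanish. -/
def IsAbelian (b : Z →ₗ[F] Z →ₗ[F] Z) (A : Submodule F Z) : Prop :=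
  ∀ x ∈ A, ∀ y ∈ A, b x y = 0

/-- an abelian subalgebra of codimension one in a Zinbiel algebra is a
(two-sided) ideal. -/
theorem stmt2 [FiniteDimensional F Z] (b : Z →ₗ[F] Z →ₗ[F] Z)
    (hZinbiel : ∀ x y z : Z, b (b x y) z = b x (b y z) + b x (b z y))
    (A : Submodule F Z) (hsub : IsSubalg b A) (hab : IsAbelian b A)
    (hcodim : Module.finrank F A + 1 = Module.finrank F Z) :
    ∀ z : Z, ∀ x ∈ A, b z x ∈ A ∧ b x z ∈ A := by
  -- pick e ∉ A
  have hAne : A ≠ ⊤ := by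
    intro h
    rw [h, finrank_top] at hcodim
    omega
  obtain ⟨e, he⟩ : ∃ e, e ∉ A := by
    by_contra h
    push_neg at h
    exact hAne (Submodule.eq_top_iff'.mpr h)
  have hsup : A ⊔ Submodule.span F {e} = ⊤ := by
    apply Submodule.eq_top_of_finrank_eq
    have hlt : A < A ⊔ Submodule.span F {e} := by
      refine lt_of_le_of_ne le_sup_left ?_
      intro h
      exact he (h ▸ Submodule.mem_sup_right (Submodule.mem_span_singleton_self e))
    have h1 : Module.finrank F A < Module.finrank F (A ⊔ Submodule.span F {e} : Submodule F Z) :=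
      Submodule.finrank_lt_finrank_of_lt hlt
    have h2 : Module.finrank F (A ⊔ Submodule.span F {e} : Submodule F Z) ≤ Module.finrank F Z :=
      Submodule.finrank_le _
    omega
  have hdec : ∀ w : Z, ∃ a ∈ A, ∃ t : F, w = a + t • e := by
    intro w
    have hw : w ∈ A ⊔ Submodule.span F {e} := hsup ▸ Submodule.mem_top
    obtain ⟨a, ha, y, hy, hw⟩ := Submodule.mem_sup.mp hw
    obtain ⟨t, ht⟩ := Submodule.mem_span_singleton.mp hy
    exact ⟨a, ha, t, by rw [← hw, ← ht]⟩
  -- key step 1 : b e x ∈ A for x ∈ A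
  have hbe : ∀ x ∈ A, b e x ∈ A := by
    intro x hx
    obtain ⟨a, ha, t, hdecx⟩ := hdec (b e x)
    by_cases ht : t = 0
    · rw [hdecx, ht, zero_smul, add_zero]; exact ha
    · exfalso
      have h1 : b (b e x) x = 0 := by
        rw [hZinbiel, hab x hx x hx, map_zero, add_zero]
      have h2 : b (b e x) x = t • b e x := by
        rw [hdecx, map_add, map_smul, LinearMap.add_apply, LinearMap.smul_apply,
          hab a ha x hx, zero_add, ← hdecx]
      have h3 : b e x = 0 := by
        have := h2.symm.trans h1
        rcases smul_eq_zero.mp this with h | h; exact absurd h ht; exact h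
      have h4 : e = (-t⁻¹) • a := by
        rw [h3] at hdecx
        have : t • e = -a := by linear_combination (norm := module) -hdecx
        calc e = t⁻¹ • (t • e) := by rw [smul_smul, inv_mul_cancel₀ ht, one_smul]
        _ = (-t⁻¹) • a := by rw [this, smul_neg, neg_smul]
      exact he (h4 ▸ A.smul_mem _ ha)
  -- key step 2 : b x e ∈ A for x ∈ A
  have hbx : ∀ x ∈ A, b x e ∈ A := by
    intro x hx
    obtain ⟨a, ha, t, hdecx⟩ := hdec (b x e)
    by_cases ht : t = 0
    · rw [hdecx, ht, zero_smul, add_zero]; exact ha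
    · exfalso
      have h1 : b (b x e) x = b x (b e x) + b x (b x e) := hZinbiel x e x
      have h2 : b x (b e x) = 0 := hab x hx _ (hbe x hx)
      have h3 : b (b x e) x = t • b e x := by
        rw [hdecx, map_add, map_smul, LinearMap.add_apply, LinearMap.smul_apply,
          hab a ha x hx, zero_add]
      have h4 : b x (b x e) = t • b x e := by
        rw [hdecx, map_add, map_smul, hab x hx a ha, zero_add, ← hdecx]
      have h5 : t • b e x = t • b x e := by rw [← h3, ← h4, h1, h2, zero_add]
      have h6 : b e x = b x e := by
        have := sub_eq_zero.mpr h5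
        rw [← smul_sub] at this
        rcases smul_eq_zero.mp this with h | h
        · exact absurd h ht
        · exact sub_eq_zero.mp h
      have h7 : t • e = b e x - a := by rw [h6, hdecx]; abel
      have h8 : e = t⁻¹ • (b e x - a) := by
        rw [← h7, smul_smul, inv_mul_cancel₀ ht, one_smul]
      exact he (h8 ▸ A.smul_mem _ (A.sub_mem (hbe x hx) ha))
  -- conclude
  intro z x hx
  obtain ⟨a, ha, t, hz⟩ := hdec z
  constructor
  · rw [hz, map_add, map_smul, LinearMap.add_apply, LinearMap.smul_apply, hab a ha x hx, zero_add]
    exact A.smul_mem _ (hbe x hx)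
  · rw [hz, map_add, map_smul, hab x hx a ha, zero_add]
    exact A.smul_mem _ (hbx x hx)
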